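/- arXiv:1706.03261 — 6 statements merged into one kernel-verified Lean document; each statement's English description precedes it below -/
import Mathlib

section
/- For every fixed symmetric positive definite matrix Λ ∈ S_n^{++}(ℝ), the function (C_1,…,C_M, μ) ↦ f({C_i}, μ, Λ) is strictly convex on ℝ^{n(M+1)}; in particular it has at most one global minimizer. -/
/-!
In `(C, μ)` the objective is a quadratic polynomial, so along a segment it satisfies the exact
identity `f (a • p + b • q) = a * f p + b * f q - a * b / 2 * H (p - q)` (`a + b = 1`), where `H`
is its (constant) Hessian quadratic form. The data terms contribute positive semidefinite
summands to `H`, and the prior terms make it positive definite: `H v = 0` forces first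
`v.2 = 0` through the `κ`-term, and then every `v.1 i = 0` through the coupling terms.
Strict convexity follows, and a strictly convex function has at most one minimizer.
-/

open Matrix Filter

noncomputable def f (n M : ℕ) (κ ν : ℝ) (Z : Fin M → Fin n → ℝ)
    (D : Fin M → Matrix (Fin n) (Fin n) ℝ) (SN : Fin M → Matrix (Fin n) (Fin n) ℝ)
    (μ0 : Fin n → ℝ) (S0 : Matrix (Fin n) (Fin n) ℝ)
    (C : Fin M → Fin n → ℝ) (μ : Fin n → ℝ) (Λ : Matrix (Fin n) (Fin n) ℝ) : ℝ :=
  (1/2) * ∑ i, (Z i - (D i).mulVec (C i)) ⬝ᵥ ((SN i)⁻¹).mulVec (Z i - (D i).mulVec (C i))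
    - ((ν - n + M)/2) * Real.log Λ.det
    + (1/2) * ∑ i, (C i - μ) ⬝ᵥ Λ.mulVec (C i - μ)
    + (κ/2) * ((μ - μ0) ⬝ᵥ Λ.mulVec (μ - μ0))
    + (1/2) * (ν • S0 * Λ).trace

theorem strictConvexOn_univ_of_combo_eq {𝕜 E : Type*} [Field 𝕜] [LinearOrder 𝕜]
    [IsStrictOrderedRing 𝕜] [AddCommGroup E] [Module 𝕜 E] {g q : E → 𝕜}
    (hq : ∀ v, v ≠ 0 → 0 < q v)
    (hg : ∀ x y : E, ∀ a b : 𝕜, a + b = 1 →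
      g (a • x + b • y) = a * g x + b * g y - a * b * q (x - y)) :
    StrictConvexOn 𝕜 Set.univ g := by
  refine ⟨convex_univ, fun x _ y _ hxy a b ha hb hab => ?_⟩
  have hgap : 0 < a * b * q (x - y) := by
    have := hq _ (sub_ne_zero.mpr hxy)
    positivity
  rw [hg x y a b hab, smul_eq_mul, smul_eq_mul]
  linarith

section QuadraticForm

variable {R m : Type*} [CommRing R] [Fintype m]

theorem dotProduct_mulVec_combo (A : Matrix m m R) (u v : m → R) {a b : R} (hab : a + b = 1) :
    (a • u + b • v) ⬝ᵥ A *ᵥ (a • u + b • v)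
      = a * (u ⬝ᵥ A *ᵥ u) + b * (v ⬝ᵥ A *ᵥ v) - a * b * ((u - v) ⬝ᵥ A *ᵥ (u - v)) := by
  simp only [dotProduct_add, add_dotProduct, mulVec_add, mulVec_smul, smul_dotProduct,
    dotProduct_smul, mulVec_sub, sub_dotProduct, dotProduct_sub, smul_eq_mul]
  linear_combination (a * (u ⬝ᵥ A *ᵥ u) + b * (v ⬝ᵥ A *ᵥ v)) * hab

theorem sub_dotProduct_mulVec_sub_comm (A : Matrix m m R) (u v : m → R) :
    (u - v) ⬝ᵥ A *ᵥ (u - v) = (v - u) ⬝ᵥ A *ᵥ (v - u) := by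
  rw [← neg_sub v u, mulVec_neg, neg_dotProduct, dotProduct_neg, neg_neg]

end QuadraticForm

section AffineCombination

variable {R V : Type*} [Ring R] [AddCommGroup V] [Module R V] {a b : R}

theorem sub_combo (hab : a + b = 1) (w x y : V) :
    w - (a • x + b • y) = a • (w - x) + b • (w - y) := by
  rw [smul_sub, smul_sub, sub_add_sub_comm, Convex.combo_self hab]

theorem combo_sub (hab : a + b = 1) (x y w : V) :
    (a • x + b • y) - w = a • (x - w) + b • (y - w) := by
  rw [smul_sub, smul_sub, sub_add_sub_comm, Convex.combo_self hab]

theorem combo_sub_combo (x y z w : V) :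
    (a • x + b • y) - (a • z + b • w) = a • (x - z) + b • (y - w) := by
  rw [smul_sub, smul_sub, sub_add_sub_comm]

end AffineCombination

section Posterior

variable {n M : ℕ} (κ : ℝ) (D SN : Fin M → Matrix (Fin n) (Fin n) ℝ) (Λ : Matrix (Fin n) (Fin n) ℝ)

noncomputable def hessianForm (v : (Fin M → Fin n → ℝ) × (Fin n → ℝ)) : ℝ :=
  ∑ i, D i *ᵥ v.1 i ⬝ᵥ (SN i)⁻¹ *ᵥ D i *ᵥ v.1 i
    + ∑ i, (v.1 i - v.2) ⬝ᵥ Λ *ᵥ (v.1 i - v.2) + κ * (v.2 ⬝ᵥ Λ *ᵥ v.2)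

theorem f_combo (ν : ℝ) (Z : Fin M → Fin n → ℝ) (μ0 : Fin n → ℝ) (S0 : Matrix (Fin n) (Fin n) ℝ)
    (p q : (Fin M → Fin n → ℝ) × (Fin n → ℝ)) {a b : ℝ} (hab : a + b = 1) :
    f n M κ ν Z D SN μ0 S0 (a • p + b • q).1 (a • p + b • q).2 Λ
      = a * f n M κ ν Z D SN μ0 S0 p.1 p.2 Λ + b * f n M κ ν Z D SN μ0 S0 q.1 q.2 Λ
        - a * b * (hessianForm κ D SN Λ (p - q) / 2) := by
  unfold f hessianForm
  simp only [Prod.fst_add, Prod.snd_add, Prod.smul_fst, Prod.smul_snd, Prod.fst_sub,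
    Prod.snd_sub, Pi.add_apply, Pi.smul_apply, Pi.sub_apply, mulVec_add, mulVec_smul]
  simp only [combo_sub_combo]
  simp only [sub_combo hab, combo_sub hab]
  simp only [dotProduct_mulVec_combo _ _ _ hab]
  simp only [sub_sub_sub_cancel_left, sub_sub_sub_cancel_right, sub_sub_sub_comm]
  -- the residual `Z i - D i *ᵥ C i` has linear part `-D i`
  simp only [fun i ↦ sub_dotProduct_mulVec_sub_comm (SN i)⁻¹ (D i *ᵥ q.1 i)]
  simp only [← mulVec_sub]
  simp only [Finset.sum_add_distrib, Finset.sum_sub_distrib, ← Finset.mul_sum]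
  linear_combination (((ν - n + M) / 2) * Real.log Λ.det - (1 / 2) * (ν • S0 * Λ).trace) * hab

variable {κ D SN Λ} in
theorem hessianForm_pos (hκ : 0 < κ) (hSN : ∀ i, ((SN i)⁻¹).PosSemidef)
    (hΛ : Λ.PosDef) {v : (Fin M → Fin n → ℝ) × (Fin n → ℝ)} (hv : v ≠ 0) :
    0 < hessianForm κ D SN Λ v := by
  have hΛ_nonneg (u : Fin n → ℝ) : 0 ≤ u ⬝ᵥ Λ *ᵥ u := by
    simpa using hΛ.posSemidef.dotProduct_mulVec_nonneg u
  have hΛ_pos {u : Fin n → ℝ} (hu : u ≠ 0) : 0 < u ⬝ᵥ Λ *ᵥ u := by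
    simpa using hΛ.dotProduct_mulVec_pos hu
  have hdata : 0 ≤ ∑ i, D i *ᵥ v.1 i ⬝ᵥ (SN i)⁻¹ *ᵥ D i *ᵥ v.1 i :=
    Finset.sum_nonneg fun i _ ↦ by simpa using (hSN i).dotProduct_mulVec_nonneg (D i *ᵥ v.1 i)
  unfold hessianForm
  by_cases hμ : v.2 = 0
  · obtain ⟨i, hi⟩ : ∃ i, v.1 i ≠ 0 := by
      by_contra! h
      exact hv (Prod.ext (funext h) hμ)
    have hprior : 0 < ∑ i, (v.1 i - v.2) ⬝ᵥ Λ *ᵥ (v.1 i - v.2) :=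
      Finset.sum_pos' (fun j _ ↦ hΛ_nonneg _) ⟨i, Finset.mem_univ i, hΛ_pos (by simpa [hμ])⟩
    nlinarith [hΛ_nonneg v.2]
  · have hprior : 0 ≤ ∑ i, (v.1 i - v.2) ⬝ᵥ Λ *ᵥ (v.1 i - v.2) :=
      Finset.sum_nonneg fun j _ ↦ hΛ_nonneg _
    nlinarith [hΛ_pos hμ]

end Posterior

theorem stmt_1_general (n M : ℕ)
    (κ ν : ℝ) (hκ : 0 < κ)
    (Z : Fin M → Fin n → ℝ) (D : Fin M → Matrix (Fin n) (Fin n) ℝ)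
    (SN : Fin M → Matrix (Fin n) (Fin n) ℝ) (hSN : ∀ i, (SN i).PosDef)
    (μ0 : Fin n → ℝ) (S0 : Matrix (Fin n) (Fin n) ℝ)
    (Λ : Matrix (Fin n) (Fin n) ℝ) (hΛ : Λ.PosDef) :
    StrictConvexOn ℝ Set.univ
      (fun p : (Fin M → Fin n → ℝ) × (Fin n → ℝ) =>
        f n M κ ν Z D SN μ0 S0 p.1 p.2 Λ) ∧
    ∀ p q : (Fin M → Fin n → ℝ) × (Fin n → ℝ),
      (∀ r : (Fin M → Fin n → ℝ) × (Fin n → ℝ), f n M κ ν Z D SN μ0 S0 p.1 p.2 Λ ≤ f n M κ ν Z D SN μ0 S0 r.1 r.2 Λ) →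
      (∀ r : (Fin M → Fin n → ℝ) × (Fin n → ℝ), f n M κ ν Z D SN μ0 S0 q.1 q.2 Λ ≤ f n M κ ν Z D SN μ0 S0 r.1 r.2 Λ) →
      p = q := by
  have hconvex : StrictConvexOn ℝ Set.univ
      (fun p : (Fin M → Fin n → ℝ) × (Fin n → ℝ) => f n M κ ν Z D SN μ0 S0 p.1 p.2 Λ) :=
    strictConvexOn_univ_of_combo_eq
      (fun _ hv ↦ half_pos (hessianForm_pos hκ (fun i ↦ (hSN i).inv.posSemidef) hΛ hv))
      (fun p q _ _ hab ↦ f_combo κ D SN Λ ν Z μ0 S0 p q hab)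
  exact ⟨hconvex, fun p q hp hq ↦ hconvex.eq_of_isMinOn (isMinOn_iff.mpr fun r _ ↦ hp r)
    (isMinOn_iff.mpr fun r _ ↦ hq r) (Set.mem_univ p) (Set.mem_univ q)⟩

/-- For every fixed symmetric positive definite Λ, the function
`(C₁,…,C_M, μ) ↦ f({C_i}, μ, Λ)` is strictly convex on `(ℝⁿ)^M × ℝⁿ`;
in particular it has at most one global minimizer. -/
theorem stmt_1 (n M : ℕ) (hn : 1 ≤ n) (hM : 1 ≤ M)
    (κ ν : ℝ) (hκ : 0 < κ) (hν : (n : ℝ) - 1 < ν)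
    (Z : Fin M → Fin n → ℝ) (D : Fin M → Matrix (Fin n) (Fin n) ℝ)
    (SN : Fin M → Matrix (Fin n) (Fin n) ℝ) (hSN : ∀ i, (SN i).PosDef)
    (μ0 : Fin n → ℝ) (S0 : Matrix (Fin n) (Fin n) ℝ) (hS0 : S0.PosDef)
    (Λ : Matrix (Fin n) (Fin n) ℝ) (hΛ : Λ.PosDef) :
    StrictConvexOn ℝ Set.univ
      (fun p : (Fin M → Fin n → ℝ) × (Fin n → ℝ) =>
        f n M κ ν Z D SN μ0 S0 p.1 p.2 Λ) ∧
    ∀ p q : (Fin M → Fin n → ℝ) × (Fin n → ℝ),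
      (∀ r : (Fin M → Fin n → ℝ) × (Fin n → ℝ), f n M κ ν Z D SN μ0 S0 p.1 p.2 Λ ≤ f n M κ ν Z D SN μ0 S0 r.1 r.2 Λ) →
      (∀ r : (Fin M → Fin n → ℝ) × (Fin n → ℝ), f n M κ ν Z D SN μ0 S0 q.1 q.2 Λ ≤ f n M κ ν Z D SN μ0 S0 r.1 r.2 Λ) →
      p = q :=
  stmt_1_general n M κ ν hκ Z D SN hSN μ0 S0 Λ hΛ
end

section
/- Fix Λ ∈ S_n^{++}(ℝ) and set A_i = Λ^{-1} D_i^T (D_i Λ^{-1} D_i^T + Σ_{N_i})^{-1} for i = 1,…,M. Then the matrix κ·Id + ∑_{i=1}^M A_i D_i is invertible, and, setting μ̂ = (κ·Id + ∑_{i=1}^M A_i D_i)^{-1} (∑_{i=1}^M A_i Z_i + κ μ_0) and Ĉ_i = A_i (Z_i − D_i μ̂) + μ̂ for each i, the point ({Ĉ_i}, μ̂) is a global minimizer of (C_1,…,C_M, μ) ↦ f({C_i}, μ, Λ) on ℝ^{n(M+1)}. -/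
/-!
For fixed `Λ`, `f` is a convex quadratic function of `(C, μ)`, so a critical point is a global
minimizer: each quadratic term lies above its tangent, and at a critical point the tangent terms
add up to zero. The `Cᵢ`-equations `Dᵢᵀ Σᵢ⁻¹ (Zᵢ - Dᵢ Ĉᵢ) = Λ (Ĉᵢ - μ̂)` come from the identity
`Dᵀ Σ⁻¹ (1 - D A) = Λ A` for the gain `A = Λ⁻¹ Dᵀ G⁻¹`, `G = D Λ⁻¹ Dᵀ + Σ`, and the
`μ`-equation `∑ (Ĉᵢ - μ̂) = κ (μ̂ - μ₀)` is the equation defining `μ̂`. The matrix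
`K = κ + ∑ Aᵢ Dᵢ` is invertible because `Λ K = κ Λ + ∑ Dᵢᵀ Gᵢ⁻¹ Dᵢ` is positive definite.
-/

open Matrix Filter

theorem Matrix.PosSemidef.dotProduct_mulVec_add_two_mul_le {ι : Type*} [Fintype ι]
    {P : Matrix ι ι ℝ} (hP : P.PosSemidef) (x y : ι → ℝ) :
    y ⬝ᵥ P *ᵥ y + 2 * ((x - y) ⬝ᵥ P *ᵥ y) ≤ x ⬝ᵥ P *ᵥ x := by
  have hPt : Pᵀ = P := by simpa [conjTranspose_eq_transpose_of_trivial] using hP.1.eq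
  have hswap : y ⬝ᵥ P *ᵥ (x - y) = (x - y) ⬝ᵥ P *ᵥ y := by
    rw [dotProduct_mulVec, ← mulVec_transpose, hPt, dotProduct_comm]
  have hd : 0 ≤ (x - y) ⬝ᵥ P *ᵥ (x - y) := by simpa using hP.dotProduct_mulVec_nonneg (x - y)
  have hx : x = y + (x - y) := by abel
  conv_rhs => rw [hx]
  rw [mulVec_add, dotProduct_add, add_dotProduct, add_dotProduct, hswap]
  linarith

theorem f_le_of_stationary {n M : ℕ} {κ ν : ℝ} (hκ : 0 ≤ κ) {Z : Fin M → Fin n → ℝ}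
    {D SN : Fin M → Matrix (Fin n) (Fin n) ℝ} {μ0 : Fin n → ℝ} {S0 Λ : Matrix (Fin n) (Fin n) ℝ}
    (hSN : ∀ i, ((SN i)⁻¹).PosSemidef) (hΛ : Λ.PosSemidef)
    {C' : Fin M → Fin n → ℝ} {μ' : Fin n → ℝ}
    (hC' : ∀ i, (D i)ᵀ *ᵥ ((SN i)⁻¹ *ᵥ (Z i - D i *ᵥ C' i)) = Λ *ᵥ (C' i - μ'))
    (hμ' : ∑ i, (C' i - μ') = κ • (μ' - μ0)) (C : Fin M → Fin n → ℝ) (μ : Fin n → ℝ) :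
    f n M κ ν Z D SN μ0 S0 C' μ' Λ ≤ f n M κ ν Z D SN μ0 S0 C μ Λ := by
  have hdata_lin : ∀ i,
      (Z i - D i *ᵥ C i - (Z i - D i *ᵥ C' i)) ⬝ᵥ (SN i)⁻¹ *ᵥ (Z i - D i *ᵥ C' i)
        = -((C i - C' i) ⬝ᵥ Λ *ᵥ (C' i - μ')) := by
    intro i
    rw [show Z i - D i *ᵥ C i - (Z i - D i *ᵥ C' i) = -(D i *ᵥ (C i - C' i)) by
      rw [mulVec_sub]; abel, neg_dotProduct, ← vecMul_transpose, ← dotProduct_mulVec, hC']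
  have hdev_lin : ∀ i, (C i - μ - (C' i - μ')) ⬝ᵥ Λ *ᵥ (C' i - μ')
      = (C i - C' i) ⬝ᵥ Λ *ᵥ (C' i - μ') - (μ - μ') ⬝ᵥ Λ *ᵥ (C' i - μ') := by
    intro i
    rw [show C i - μ - (C' i - μ') = (C i - C' i) - (μ - μ') by abel, sub_dotProduct]
  have hterms : ∀ i,
      (Z i - D i *ᵥ C' i) ⬝ᵥ (SN i)⁻¹ *ᵥ (Z i - D i *ᵥ C' i) + (C' i - μ') ⬝ᵥ Λ *ᵥ (C' i - μ')
        - 2 * ((μ - μ') ⬝ᵥ Λ *ᵥ (C' i - μ'))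
      ≤ (Z i - D i *ᵥ C i) ⬝ᵥ (SN i)⁻¹ *ᵥ (Z i - D i *ᵥ C i) + (C i - μ) ⬝ᵥ Λ *ᵥ (C i - μ) := by
    intro i
    have hdata := (hSN i).dotProduct_mulVec_add_two_mul_le (Z i - D i *ᵥ C i) (Z i - D i *ᵥ C' i)
    have hdev := hΛ.dotProduct_mulVec_add_two_mul_le (C i - μ) (C' i - μ')
    rw [hdata_lin] at hdata
    rw [hdev_lin] at hdev
    linarith
  have hprior := mul_le_mul_of_nonneg_left
    (hΛ.dotProduct_mulVec_add_two_mul_le (μ - μ0) (μ' - μ0)) (div_nonneg hκ zero_le_two)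
  rw [show μ - μ0 - (μ' - μ0) = μ - μ' by abel] at hprior
  have hsum_lin : ∑ i, (μ - μ') ⬝ᵥ Λ *ᵥ (C' i - μ') = κ * ((μ - μ') ⬝ᵥ Λ *ᵥ (μ' - μ0)) := by
    rw [← dotProduct_sum, ← mulVec_sum, hμ', mulVec_smul, dotProduct_smul, smul_eq_mul]
  have hsum := Finset.sum_le_sum fun i (_ : i ∈ Finset.univ) => hterms i
  simp only [Finset.sum_sub_distrib, Finset.sum_add_distrib, ← Finset.mul_sum, hsum_lin] at hsum
  simp only [f]
  linarith

section KalmanGain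

variable {R : Type*} [CommRing R] {m n : Type*} [Fintype m] [Fintype n] [DecidableEq m]
  [DecidableEq n]

/-- The Kalman gain for prior precision `Λ`, observation matrix `D` and noise covariance `S`. -/
noncomputable def kalmanGain (Λ : Matrix n n R) (D : Matrix m n R) (S : Matrix m m R) :
    Matrix n m R :=
  Λ⁻¹ * Dᵀ * (D * Λ⁻¹ * Dᵀ + S)⁻¹

theorem mul_kalmanGain {Λ : Matrix n n R} (hΛ : IsUnit Λ.det) (D : Matrix m n R)
    (S : Matrix m m R) : Λ * kalmanGain Λ D S = Dᵀ * (D * Λ⁻¹ * Dᵀ + S)⁻¹ := by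
  rw [kalmanGain, ← Matrix.mul_assoc, ← Matrix.mul_assoc, mul_nonsing_inv _ hΛ, Matrix.one_mul]

theorem transpose_mul_inv_mul_one_sub_mul_kalmanGain {Λ : Matrix n n R} {S : Matrix m m R}
    {D : Matrix m n R} (hΛ : IsUnit Λ.det) (hS : IsUnit S.det)
    (hG : IsUnit (D * Λ⁻¹ * Dᵀ + S).det) :
    Dᵀ * S⁻¹ * (1 - D * kalmanGain Λ D S) = Λ * kalmanGain Λ D S := by
  have hresid : 1 - D * kalmanGain Λ D S = S * (D * Λ⁻¹ * Dᵀ + S)⁻¹ := by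
    calc 1 - D * kalmanGain Λ D S
        = (D * Λ⁻¹ * Dᵀ + S) * (D * Λ⁻¹ * Dᵀ + S)⁻¹ - D * Λ⁻¹ * Dᵀ * (D * Λ⁻¹ * Dᵀ + S)⁻¹ := by
          rw [mul_nonsing_inv _ hG, kalmanGain]; simp only [Matrix.mul_assoc]
      _ = S * (D * Λ⁻¹ * Dᵀ + S)⁻¹ := by rw [← Matrix.sub_mul, add_sub_cancel_left]
  rw [hresid, mul_kalmanGain hΛ, Matrix.mul_assoc, ← Matrix.mul_assoc S⁻¹,
    nonsing_inv_mul _ hS, Matrix.one_mul]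

end KalmanGain

theorem Matrix.PosDef.mul_inv_mul_transpose_add {m n : Type*} [Fintype m] [Fintype n]
    [DecidableEq n] {Λ : Matrix n n ℝ} {S : Matrix m m ℝ} (hΛ : Λ.PosDef) (hS : S.PosDef)
    (D : Matrix m n ℝ) : (D * Λ⁻¹ * Dᵀ + S).PosDef := by
  have hDΛD : (D * Λ⁻¹ * Dᵀ).PosSemidef := by
    simpa using hΛ.inv.posSemidef.mul_mul_conjTranspose_same D
  exact PosDef.posSemidef_add hDΛD hS

theorem isUnit_smul_one_add_sum_kalmanGain_mul {ι m n : Type*} [Fintype ι] [Fintype m]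
    [Fintype n] [DecidableEq m] [DecidableEq n] {κ : ℝ} (hκ : 0 < κ) {Λ : Matrix n n ℝ}
    (hΛ : Λ.PosDef) {D : ι → Matrix m n ℝ} {SN : ι → Matrix m m ℝ} (hSN : ∀ i, (SN i).PosDef) :
    IsUnit (κ • (1 : Matrix n n ℝ) + ∑ i, kalmanGain Λ (D i) (SN i) * D i) := by
  have hΛK : Λ * (κ • 1 + ∑ i, kalmanGain Λ (D i) (SN i) * D i)
      = κ • Λ + ∑ i, (D i)ᵀ * (D i * Λ⁻¹ * (D i)ᵀ + SN i)⁻¹ * D i := by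
    simp only [Matrix.mul_add, Matrix.mul_smul, Matrix.mul_one, Finset.mul_sum,
      ← Matrix.mul_assoc, mul_kalmanGain ((isUnit_iff_isUnit_det _).1 hΛ.isUnit)]
  have hΛKpd : (Λ * (κ • 1 + ∑ i, kalmanGain Λ (D i) (SN i) * D i)).PosDef := by
    rw [hΛK]
    refine (hΛ.smul hκ).add_posSemidef (posSemidef_sum _ fun i _ => ?_)
    simpa using
      (hΛ.mul_inv_mul_transpose_add (hSN i) (D i)).inv.posSemidef.conjTranspose_mul_mul_same (D i)
  rw [isUnit_iff_isUnit_det]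
  exact isUnit_of_mul_isUnit_right (det_mul Λ _ ▸ (isUnit_iff_isUnit_det _).1 hΛKpd.isUnit)

theorem sum_mulVec_sub_mulVec_eq_smul {R ι n : Type*} [CommRing R] [Fintype ι] [Fintype n]
    [DecidableEq n] {κ : R} {A D : ι → Matrix n n R} {Z : ι → n → R} {μ0 μ : n → R}
    (h : (κ • 1 + ∑ i, A i * D i) *ᵥ μ = ∑ i, A i *ᵥ Z i + κ • μ0) :
    ∑ i, A i *ᵥ (Z i - D i *ᵥ μ) = κ • (μ - μ0) := by
  rw [add_mulVec, smul_mulVec, one_mulVec, sum_mulVec] at h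
  simp only [mulVec_sub, Finset.sum_sub_distrib, mulVec_mulVec]
  rw [smul_sub, ← sub_eq_of_eq_add' h.symm]
  abel

theorem stmt_2_general (n M : ℕ)
    (κ ν : ℝ) (hκ : 0 < κ)
    (Z : Fin M → Fin n → ℝ) (D : Fin M → Matrix (Fin n) (Fin n) ℝ)
    (SN : Fin M → Matrix (Fin n) (Fin n) ℝ) (hSN : ∀ i, (SN i).PosDef)
    (μ0 : Fin n → ℝ) (S0 : Matrix (Fin n) (Fin n) ℝ)
    (Λ : Matrix (Fin n) (Fin n) ℝ) (hΛ : Λ.PosDef)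
    (A : Fin M → Matrix (Fin n) (Fin n) ℝ)
    (hA : ∀ i, A i = Λ⁻¹ * (D i)ᵀ * (D i * Λ⁻¹ * (D i)ᵀ + SN i)⁻¹) :
    IsUnit (κ • (1 : Matrix (Fin n) (Fin n) ℝ) + ∑ i, A i * D i) ∧
    ∀ (C : Fin M → Fin n → ℝ) (μ : Fin n → ℝ),
      f n M κ ν Z D SN μ0 S0
        (fun i => (A i).mulVec (Z i - (D i).mulVec
            ((κ • (1 : Matrix (Fin n) (Fin n) ℝ) + ∑ j, A j * D j)⁻¹.mulVec
              (∑ j, (A j).mulVec (Z j) + κ • μ0)))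
          + (κ • (1 : Matrix (Fin n) (Fin n) ℝ) + ∑ j, A j * D j)⁻¹.mulVec
              (∑ j, (A j).mulVec (Z j) + κ • μ0))
        ((κ • (1 : Matrix (Fin n) (Fin n) ℝ) + ∑ j, A j * D j)⁻¹.mulVec
          (∑ j, (A j).mulVec (Z j) + κ • μ0)) Λ
      ≤ f n M κ ν Z D SN μ0 S0 C μ Λ := by
  simp only [show ∀ i, A i = kalmanGain Λ (D i) (SN i) from hA]
  have hdet {P : Matrix (Fin n) (Fin n) ℝ} (hP : P.PosDef) : IsUnit P.det :=
    (isUnit_iff_isUnit_det _).1 hP.isUnit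
  have hK := isUnit_smul_one_add_sum_kalmanGain_mul hκ hΛ (D := D) hSN
  set K := κ • (1 : Matrix (Fin n) (Fin n) ℝ) + ∑ j, kalmanGain Λ (D j) (SN j) * D j
  set μ' := K⁻¹ *ᵥ (∑ j, kalmanGain Λ (D j) (SN j) *ᵥ Z j + κ • μ0) with hμ'
  refine ⟨hK, f_le_of_stationary hκ.le (fun i => (hSN i).inv.posSemidef) hΛ.posSemidef ?_ ?_⟩
  · intro i
    have hresid : Z i - D i *ᵥ (kalmanGain Λ (D i) (SN i) *ᵥ (Z i - D i *ᵥ μ') + μ')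
        = (1 - D i * kalmanGain Λ (D i) (SN i)) *ᵥ (Z i - D i *ᵥ μ') := by
      rw [sub_mulVec, one_mulVec, mulVec_add, mulVec_mulVec]
      abel
    rw [add_sub_cancel_right, hresid, mulVec_mulVec, mulVec_mulVec,
      transpose_mul_inv_mul_one_sub_mul_kalmanGain (hdet hΛ) (hdet (hSN i))
        (hdet (hΛ.mul_inv_mul_transpose_add (hSN i) (D i))), ← mulVec_mulVec]
  · simp only [add_sub_cancel_right]
    refine sum_mulVec_sub_mulVec_eq_smul ?_
    rw [hμ', mulVec_mulVec, mul_nonsing_inv _ ((isUnit_iff_isUnit_det _).1 hK), one_mulVec]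

/-- With `A_i = Λ⁻¹ Dᵢᵀ (Dᵢ Λ⁻¹ Dᵢᵀ + Σ_{N_i})⁻¹`, the matrix
`κ·Id + ∑ A_i D_i` is invertible, and the explicit point `({Ĉ_i}, μ̂)` is a global
minimizer of `(C, μ) ↦ f(C, μ, Λ)`. -/
theorem stmt_2 (n M : ℕ) (hn : 1 ≤ n) (hM : 1 ≤ M)
    (κ ν : ℝ) (hκ : 0 < κ) (hν : (n : ℝ) - 1 < ν)
    (Z : Fin M → Fin n → ℝ) (D : Fin M → Matrix (Fin n) (Fin n) ℝ)
    (SN : Fin M → Matrix (Fin n) (Fin n) ℝ) (hSN : ∀ i, (SN i).PosDef)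
    (μ0 : Fin n → ℝ) (S0 : Matrix (Fin n) (Fin n) ℝ) (hS0 : S0.PosDef)
    (Λ : Matrix (Fin n) (Fin n) ℝ) (hΛ : Λ.PosDef)
    (A : Fin M → Matrix (Fin n) (Fin n) ℝ)
    (hA : ∀ i, A i = Λ⁻¹ * (D i)ᵀ * (D i * Λ⁻¹ * (D i)ᵀ + SN i)⁻¹) :
    IsUnit (κ • (1 : Matrix (Fin n) (Fin n) ℝ) + ∑ i, A i * D i) ∧
    ∀ (C : Fin M → Fin n → ℝ) (μ : Fin n → ℝ),
      f n M κ ν Z D SN μ0 S0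
        (fun i => (A i).mulVec (Z i - (D i).mulVec
            ((κ • (1 : Matrix (Fin n) (Fin n) ℝ) + ∑ j, A j * D j)⁻¹.mulVec
              (∑ j, (A j).mulVec (Z j) + κ • μ0)))
          + (κ • (1 : Matrix (Fin n) (Fin n) ℝ) + ∑ j, A j * D j)⁻¹.mulVec
              (∑ j, (A j).mulVec (Z j) + κ • μ0))
        ((κ • (1 : Matrix (Fin n) (Fin n) ℝ) + ∑ j, A j * D j)⁻¹.mulVec
          (∑ j, (A j).mulVec (Z j) + κ • μ0)) Λ
      ≤ f n M κ ν Z D SN μ0 S0 C μ Λ :=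
  stmt_2_general n M κ ν hκ Z D SN hSN μ0 S0 Λ hΛ A hA
end

section
/- Fix ({C_i}, μ) ∈ (ℝ^n)^M × ℝ^n. The matrix S = (ν Σ_0 + κ(μ − μ_0)(μ − μ_0)^T + ∑_{i=1}^M (C_i − μ)(C_i − μ)^T)/(ν + M − n) is symmetric positive definite, and the matrix Λ̂ = S^{-1} ∈ S_n^{++}(ℝ) is a global minimizer of Λ ↦ f({C_i}, μ, Λ) over S_n^{++}(ℝ). -/
/-! Up to a term independent of `Λ`, `f` equals `((ν + M - n)/2) (trace (S Λ) - log det Λ)`.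
Writing `Λ = Bᴴ B`, the eigenvalues `λᵢ` of the positive definite matrix `B S Bᴴ` satisfy
`trace (S Λ) - log det (S Λ) = ∑ (λᵢ - log λᵢ) ≥ n`, since `log x ≤ x - 1`; equality holds at
`Λ = S⁻¹`, where all `λᵢ = 1`. Positive definiteness of `S` is that of `ν Σ₀` plus positive
semidefinite rank-one terms. -/

open Matrix Filter

namespace Matrix

variable {m : Type*} [Fintype m] [DecidableEq m]

omit [DecidableEq m] in
lemma trace_vecMulVec_mul {R : Type*} [CommSemiring R] (v w : m → R) (A : Matrix m m R) :
    (vecMulVec v w * A).trace = w ⬝ᵥ A *ᵥ v := by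
  rw [vecMulVec_mul, trace_vecMulVec, dotProduct_comm, dotProduct_mulVec]

lemma PosDef.card_add_log_det_le_trace {X : Matrix m m ℝ} (hX : X.PosDef) :
    Fintype.card m + Real.log X.det ≤ X.trace := by
  set ev := hX.isHermitian.eigenvalues
  have hdet : X.det = ∏ i, ev i := by simpa using hX.isHermitian.det_eq_prod_eigenvalues
  have htr : X.trace = ∑ i, ev i := by simpa using hX.isHermitian.trace_eq_sum_eigenvalues
  rw [hdet, htr, Real.log_prod fun i _ => (hX.eigenvalues_pos i).ne']
  calc (Fintype.card m : ℝ) + ∑ i, Real.log (ev i) = ∑ i, (1 + Real.log (ev i)) := by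
        simp [Finset.sum_add_distrib]
    _ ≤ ∑ i, ev i := Finset.sum_le_sum fun i _ => by
        linarith [Real.log_le_sub_one_of_pos (hX.eigenvalues_pos i)]

open scoped MatrixOrder in
lemma PosDef.card_add_log_det_mul_le_trace_mul {P Q : Matrix m m ℝ} (hP : P.PosDef)
    (hQ : Q.PosDef) : Fintype.card m + Real.log (P.det * Q.det) ≤ (P * Q).trace := by
  obtain ⟨B, rfl⟩ := CStarAlgebra.nonneg_iff_eq_star_mul_self.mp hQ.posSemidef.nonneg
  have hB : IsUnit B := isUnit_of_mul_isUnit_right hQ.isUnit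
  have hX : (B * P * star B).PosDef := (Matrix.IsUnit.posDef_star_right_conjugate_iff hB).mpr hP
  have hdet : (B * P * star B).det = P.det * (star B * B).det := by
    simp only [det_mul]; ring
  have htr : (B * P * star B).trace = (P * (star B * B)).trace := by
    rw [trace_mul_cycle, trace_mul_comm]
  simpa [hdet, htr] using hX.card_add_log_det_le_trace

lemma PosDef.isMinOn_trace_mul_sub_log_det {S : Matrix m m ℝ} (hS : S.PosDef) :
    IsMinOn (fun Λ => (S * Λ).trace - Real.log Λ.det) {Λ | Λ.PosDef} S⁻¹ := by
  refine isMinOn_iff.mpr fun Λ (hΛ : Λ.PosDef) => ?_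
  have key := hS.card_add_log_det_mul_le_trace_mul hΛ
  rw [Real.log_mul hS.det_pos.ne' hΛ.det_pos.ne'] at key
  rw [mul_nonsing_inv _ hS.det_pos.ne'.isUnit, trace_one, det_nonsing_inv, Ring.inverse_eq_inv',
    Real.log_inv]
  linarith

end Matrix

section Model

variable {n M : ℕ} (κ ν : ℝ) (μ0 : Fin n → ℝ) (S0 : Matrix (Fin n) (Fin n) ℝ)
  (C : Fin M → Fin n → ℝ) (μ : Fin n → ℝ)

def scatterMatrix : Matrix (Fin n) (Fin n) ℝ :=
  ν • S0 + κ • vecMulVec (μ - μ0) (μ - μ0) + ∑ i, vecMulVec (C i - μ) (C i - μ)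

lemma trace_scatterMatrix_mul (Λ : Matrix (Fin n) (Fin n) ℝ) :
    (scatterMatrix κ ν μ0 S0 C μ * Λ).trace = (ν • S0 * Λ).trace
      + κ * ((μ - μ0) ⬝ᵥ Λ *ᵥ (μ - μ0)) + ∑ i, (C i - μ) ⬝ᵥ Λ *ᵥ (C i - μ) := by
  simp only [scatterMatrix, add_mul, trace_add, smul_mul_assoc, trace_smul, Finset.sum_mul,
    trace_sum, trace_vecMulVec_mul, smul_eq_mul]

lemma scatterMatrix_posDef (hκ : 0 ≤ κ) (hν : 0 < ν) (hS0 : S0.PosDef) :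
    (scatterMatrix κ ν μ0 S0 C μ).PosDef := by
  have hvv (v : Fin n → ℝ) : (vecMulVec v v).PosSemidef := by
    simpa using posSemidef_vecMulVec_self_star v
  exact ((hS0.smul hν).add_posSemidef ((hvv _).smul hκ)).add_posSemidef
    (posSemidef_sum _ fun i _ => hvv _)

lemma f_le_f_iff (Z : Fin M → Fin n → ℝ) (D SN : Fin M → Matrix (Fin n) (Fin n) ℝ)
    (Λ Λ' : Matrix (Fin n) (Fin n) ℝ) :
    f n M κ ν Z D SN μ0 S0 C μ Λ ≤ f n M κ ν Z D SN μ0 S0 C μ Λ' ↔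
      (scatterMatrix κ ν μ0 S0 C μ * Λ).trace - (ν - n + M) * Real.log Λ.det ≤
        (scatterMatrix κ ν μ0 S0 C μ * Λ').trace - (ν - n + M) * Real.log Λ'.det := by
  simp only [f, trace_scatterMatrix_mul]
  constructor <;> intro h <;> linarith

end Model

theorem stmt_4_general (n M : ℕ) (hn : 1 ≤ n) (hM : 1 ≤ M)
    (κ ν : ℝ) (hκ : 0 < κ) (hν : (n : ℝ) - 1 < ν)
    (Z : Fin M → Fin n → ℝ) (D : Fin M → Matrix (Fin n) (Fin n) ℝ)
    (SN : Fin M → Matrix (Fin n) (Fin n) ℝ)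
    (μ0 : Fin n → ℝ) (S0 : Matrix (Fin n) (Fin n) ℝ) (hS0 : S0.PosDef)
    (C : Fin M → Fin n → ℝ) (μ : Fin n → ℝ)
    (S : Matrix (Fin n) (Fin n) ℝ)
    (hS : S = (ν + M - n)⁻¹ •
        (ν • S0 + κ • vecMulVec (μ - μ0) (μ - μ0)
          + ∑ i, vecMulVec (C i - μ) (C i - μ))) :
    S.PosDef ∧ (S⁻¹).PosDef ∧
    ∀ Λ : Matrix (Fin n) (Fin n) ℝ, Λ.PosDef →
      f n M κ ν Z D SN μ0 S0 C μ S⁻¹ ≤ f n M κ ν Z D SN μ0 S0 C μ Λ := by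
  have hν0 : 0 < ν := by linarith [(Nat.one_le_cast (α := ℝ)).mpr hn]
  have ha : 0 < ν + M - n := by linarith [(Nat.one_le_cast (α := ℝ)).mpr hM]
  have hscatter : scatterMatrix κ ν μ0 S0 C μ = (ν + M - n) • S := by
    rw [hS, smul_inv_smul₀ ha.ne', scatterMatrix]
  have hSpd : S.PosDef := by
    rw [hS]
    exact (scatterMatrix_posDef κ ν μ0 S0 C μ hκ.le hν0 hS0).smul (inv_pos.mpr ha)
  refine ⟨hSpd, hSpd.inv, fun Λ hΛ => ?_⟩
  rw [f_le_f_iff, hscatter, show ν - n + M = ν + M - n by ring]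
  simp only [smul_mul_assoc, trace_smul, smul_eq_mul, ← mul_sub]
  exact mul_le_mul_of_nonneg_left (isMinOn_iff.mp hSpd.isMinOn_trace_mul_sub_log_det Λ hΛ) ha.le

/-- The matrix
`S = (ν Σ₀ + κ(μ−μ₀)(μ−μ₀)ᵀ + ∑ (C_i−μ)(C_i−μ)ᵀ)/(ν+M−n)` is symmetric positive
definite, and `Λ̂ = S⁻¹` is a global minimizer of `Λ ↦ f({C_i}, μ, Λ)` over the
symmetric positive definite matrices. -/
theorem stmt_4 (n M : ℕ) (hn : 1 ≤ n) (hM : 1 ≤ M)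
    (κ ν : ℝ) (hκ : 0 < κ) (hν : (n : ℝ) - 1 < ν)
    (Z : Fin M → Fin n → ℝ) (D : Fin M → Matrix (Fin n) (Fin n) ℝ)
    (SN : Fin M → Matrix (Fin n) (Fin n) ℝ) (hSN : ∀ i, (SN i).PosDef)
    (μ0 : Fin n → ℝ) (S0 : Matrix (Fin n) (Fin n) ℝ) (hS0 : S0.PosDef)
    (C : Fin M → Fin n → ℝ) (μ : Fin n → ℝ)
    (S : Matrix (Fin n) (Fin n) ℝ)
    (hS : S = (ν + M - n)⁻¹ •
        (ν • S0 + κ • vecMulVec (μ - μ0) (μ - μ0)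
          + ∑ i, vecMulVec (C i - μ) (C i - μ))) :
    S.PosDef ∧ (S⁻¹).PosDef ∧
    ∀ Λ : Matrix (Fin n) (Fin n) ℝ, Λ.PosDef →
      f n M κ ν Z D SN μ0 S0 C μ S⁻¹ ≤ f n M κ ν Z D SN μ0 S0 C μ Λ :=
  stmt_4_general n M hn hM κ ν hκ hν Z D SN μ0 S0 hS0 C μ S hS
end

section
/- The function f is coercive on ℝ^{n(M+1)} × S_n^{++}(ℝ): for every sequence ({C_i^k}, μ^k, Λ^k) in (ℝ^n)^M × ℝ^n × S_n^{++}(ℝ) with ‖({C_i^k}, μ^k, Λ^k)‖ → ∞, one has f({C_i^k}, μ^k, Λ^k) → +∞. -/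
/-! Let `l` be the smallest eigenvalue of `Λ`, `t` its trace and `ε` the smallest eigenvalue of
`Σ₀`. Then `det Λ ≤ l (1 + t)ⁿ`, the `Λ`-quadratic terms of `f` are at least `l R / 2` with
`R = ∑ |Cᵢ - μ|² + κ |μ - μ₀|²`, and `tr (ν Σ₀ Λ) ≥ ν ε t`, so with `a = (ν - n + M) / 2 > 0`
`f ≥ l R / 2 + ν ε t / 2 - a log l - a n log (1 + t)`. Minimising separately in `l` and in
`1 + t` (by `log y ≤ y - 1`) leaves `a log (c + R / 2) + c t / 2 + K` with `c = ν ε / 4`, which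
tends to `+∞` because `R` is coercive in `(C, μ)` and `t` dominates the entries of `Λ`. -/

open Matrix Filter

attribute [local instance] Matrix.normedAddCommGroup

open Bornology

theorem sq_norm_le_sum_sq_norm {ι E : Type*} [Fintype ι] [SeminormedAddGroup E] (w : ι → E) :
    ‖w‖ ^ 2 ≤ ∑ i, ‖w i‖ ^ 2 := by
  have hsum : 0 ≤ ∑ i, ‖w i‖ ^ 2 := by positivity
  refine (Real.le_sqrt (norm_nonneg w) hsum).mp <|
    (pi_norm_le_iff_of_nonneg (Real.sqrt_nonneg _)).mpr fun i =>
      (Real.le_sqrt (norm_nonneg _) hsum).mpr ?_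
  exact Finset.single_le_sum (f := fun j => ‖w j‖ ^ 2) (fun j _ => by positivity)
    (Finset.mem_univ i)

theorem sq_norm_le_dotProduct_self {m : Type*} [Fintype m] (v : m → ℝ) : ‖v‖ ^ 2 ≤ v ⬝ᵥ v := by
  simpa only [Real.norm_eq_abs, sq, abs_mul_abs_self, dotProduct] using sq_norm_le_sum_sq_norm v

theorem tendsto_add_cobounded_prod {E F : Type*} [Bornology E] [Bornology F] {g : E → ℝ}
    {h : F → ℝ} {a b : ℝ} (hg : Tendsto g (cobounded E) atTop)
    (hh : Tendsto h (cobounded F) atTop) (hga : ∀ x, a ≤ g x) (hhb : ∀ y, b ≤ h y) :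
    Tendsto (fun p : E × F => g p.1 + h p.2) (cobounded (E × F)) atTop := by
  rw [cobounded_prod, Filter.coprod, tendsto_sup]
  exact ⟨tendsto_atTop_add_right_of_le _ b (hg.comp tendsto_comap) fun p => hhb p.2,
    tendsto_atTop_add_left_of_le _ a (fun p => hga p.1) (hh.comp tendsto_comap)⟩

/-- Twice the `Λ`-quadratic part of `f` at `Λ = 1`. -/
def deviation {ι m : Type*} [Fintype ι] [Fintype m] (κ : ℝ) (μ0 : m → ℝ)
    (p : (ι → m → ℝ) × (m → ℝ)) : ℝ :=
  ∑ i, (p.1 i - p.2) ⬝ᵥ (p.1 i - p.2) + κ * ((p.2 - μ0) ⬝ᵥ (p.2 - μ0))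

section deviation

variable {ι m : Type*} [Fintype ι] [Fintype m] {κ : ℝ} {μ0 : m → ℝ}

theorem deviation_nonneg (hκ : 0 ≤ κ) (p : (ι → m → ℝ) × (m → ℝ)) : 0 ≤ deviation κ μ0 p :=
  add_nonneg (Finset.sum_nonneg fun _ _ => dotProduct_self_star_nonneg _)
    (mul_nonneg hκ (dotProduct_self_star_nonneg _))

theorem min_mul_sq_norm_sub_le_deviation (hκ : 0 ≤ κ) (p : (ι → m → ℝ) × (m → ℝ)) :
    min 1 κ * (‖p‖ ^ 2 - 2 * ‖μ0‖ ^ 2) ≤ 4 * deviation κ μ0 p := by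
  obtain ⟨C, μ⟩ := p
  set x := ‖C - fun _ => μ‖
  set y := ‖μ - μ0‖
  have hx : x ^ 2 ≤ ∑ i, (C i - μ) ⬝ᵥ (C i - μ) :=
    (sq_norm_le_sum_sq_norm _).trans (Finset.sum_le_sum fun i _ => sq_norm_le_dotProduct_self _)
  have hy := sq_norm_le_dotProduct_self (μ - μ0)
  have hμ : ‖μ‖ ≤ y + ‖μ0‖ := by simpa using norm_add_le (μ - μ0) μ0
  have hC : ‖C‖ ≤ ‖μ‖ + x :=
    (norm_le_norm_add_norm_sub' C _).trans (add_le_add_left (pi_norm_const_le μ) _)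
  have hp : ‖(C, μ)‖ ≤ x + y + ‖μ0‖ := by
    rw [Prod.norm_def]
    exact max_le (by linarith) (by linarith [norm_nonneg (C - fun _ => μ)])
  have hsq : ‖(C, μ)‖ ^ 2 - 2 * ‖μ0‖ ^ 2 ≤ 4 * (x ^ 2 + y ^ 2) := by
    nlinarith [norm_nonneg (C, μ), norm_nonneg μ0, sq_nonneg (x - y), sq_nonneg (x + y - ‖μ0‖)]
  have hmin : 0 ≤ min 1 κ := le_min zero_le_one hκ
  calc min 1 κ * (‖(C, μ)‖ ^ 2 - 2 * ‖μ0‖ ^ 2) ≤ 4 * (min 1 κ * x ^ 2 + min 1 κ * y ^ 2) :=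
        (mul_le_mul_of_nonneg_left hsq hmin).trans_eq (by ring)
    _ ≤ 4 * (x ^ 2 + κ * y ^ 2) := by
        gcongr
        · exact mul_le_of_le_one_left (sq_nonneg x) (min_le_left 1 κ)
        · exact min_le_right 1 κ
    _ ≤ 4 * deviation κ μ0 (C, μ) := by
        rw [deviation]
        linarith [mul_le_mul_of_nonneg_left hy hκ]

theorem tendsto_deviation_cobounded (hκ : 0 < κ) :
    Tendsto (deviation (ι := ι) κ μ0) (cobounded _) atTop := by
  have hlow : Tendsto (fun p : (ι → m → ℝ) × (m → ℝ) => min 1 κ * (‖p‖ ^ 2 - 2 * ‖μ0‖ ^ 2) / 4)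
      (cobounded _) atTop :=
    ((tendsto_atTop_add_const_right _ _ <| (tendsto_pow_atTop two_ne_zero).comp
      tendsto_norm_cobounded_atTop).const_mul_atTop (lt_min one_pos hκ)).atTop_div_const four_pos
  refine tendsto_atTop_mono (fun p => ?_) hlow
  linarith [min_mul_sq_norm_sub_le_deviation (μ0 := μ0) hκ.le p]

end deviation

section MatrixOrder

open scoped MatrixOrder

namespace Matrix

variable {n : Type*} [Fintype n] [DecidableEq n]

theorem PosSemidef.trace_mul_nonneg {A B : Matrix n n ℝ} (hA : A.PosSemidef)
    (hB : B.PosSemidef) : 0 ≤ (A * B).trace := by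
  obtain ⟨R, rfl⟩ := CStarAlgebra.nonneg_iff_eq_star_mul_self.mp hB.nonneg
  rw [← Matrix.mul_assoc, trace_mul_cycle, star_eq_conjTranspose]
  exact (hA.mul_mul_conjTranspose_same R).trace_nonneg

theorem trace_mul_le_trace_mul_of_le {A B P : Matrix n n ℝ} (hAB : A ≤ B) (hP : P.PosSemidef) :
    (A * P).trace ≤ (B * P).trace := by
  have := (le_iff.mp hAB).trace_mul_nonneg hP
  rwa [Matrix.sub_mul, trace_sub, sub_nonneg] at this

theorem smul_dotProduct_le_of_smul_one_le {A : Matrix n n ℝ} {l : ℝ} (h : l • 1 ≤ A)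
    (v : n → ℝ) : l * (v ⬝ᵥ v) ≤ v ⬝ᵥ A *ᵥ v := by
  have := (le_iff.mp h).dotProduct_mulVec_nonneg v
  rwa [star_trivial, sub_mulVec, dotProduct_sub, smul_mulVec, one_mulVec, dotProduct_smul,
    smul_eq_mul, sub_nonneg] at this

theorem PosSemidef.two_mul_abs_apply_le {A : Matrix n n ℝ} (hA : A.PosSemidef) (i j : n) :
    2 * |A i j| ≤ A i i + A j j := by
  have hsym : A j i = A i j := by simpa using congrFun (congrFun hA.isHermitian i) j
  have hquad : ∀ c : ℝ, 0 ≤ A i i + c * (A i j + A j i) + c ^ 2 * A j j := fun c => by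
    have := hA.dotProduct_mulVec_nonneg (Pi.single i 1 + Pi.single j c)
    simp only [star_trivial, mulVec_add, add_dotProduct, dotProduct_add, mulVec_single,
      single_dotProduct, Pi.smul_apply, col_apply, op_smul_eq_mul] at this
    linear_combination this
  rw [hsym] at hquad
  rcases abs_cases (A i j) with ⟨h, -⟩ | ⟨h, -⟩
  · linarith [hquad (-1)]
  · linarith [hquad 1]

theorem PosSemidef.norm_le_trace {A : Matrix n n ℝ} (hA : A.PosSemidef) : ‖A‖ ≤ A.trace := by
  have hdiag : ∀ i, A i i ≤ A.trace := fun i =>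
    Finset.single_le_sum (f := fun j => A j j) (fun j _ => hA.diag_nonneg) (Finset.mem_univ i)
  refine (norm_le_iff hA.trace_nonneg).mpr fun i j => ?_
  rw [Real.norm_eq_abs]
  linarith [hA.two_mul_abs_apply_le i j, hdiag i, hdiag j]

theorem PosDef.exists_smul_one_le_and_det_le [Nonempty n] {A : Matrix n n ℝ} (hA : A.PosDef) :
    ∃ l, 0 < l ∧ l • (1 : Matrix n n ℝ) ≤ A ∧ l ≤ A.trace ∧
      A.det ≤ l * (1 + A.trace) ^ Fintype.card n := by
  set ev := hA.isHermitian.eigenvalues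
  obtain ⟨i, -, hi⟩ := Finset.exists_min_image Finset.univ ev Finset.univ_nonempty
  have hpos := hA.eigenvalues_pos
  have hle_trace : ∀ j, ev j ≤ A.trace := fun j => by
    rw [hA.isHermitian.trace_eq_sum_eigenvalues]
    exact_mod_cast Finset.single_le_sum (fun k _ => (hpos k).le) (Finset.mem_univ j)
  refine ⟨ev i, hpos i, ?_, hle_trace i, ?_⟩
  · rw [← Algebra.algebraMap_eq_smul_one,
      algebraMap_le_iff_le_spectrum hA.isHermitian.isSelfAdjoint,
      hA.isHermitian.spectrum_real_eq_range_eigenvalues]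
    rintro _ ⟨j, rfl⟩
    exact hi j (Finset.mem_univ j)
  · rw [hA.isHermitian.det_eq_prod_eigenvalues, ← Finset.mul_prod_erase _ _ (Finset.mem_univ i)]
    refine mul_le_mul_of_nonneg_left ?_ (hpos i).le
    calc ∏ j ∈ Finset.univ.erase i, ev j ≤ ∏ _j ∈ Finset.univ.erase i, (1 + A.trace) :=
          Finset.prod_le_prod (fun j _ => (hpos j).le) (fun j _ => by linarith [hle_trace j])
      _ ≤ (1 + A.trace) ^ Fintype.card n := by
          rw [Finset.prod_const]
          exact pow_le_pow_right₀ (by linarith [hpos i, hle_trace i]) (Finset.card_le_univ _)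

end Matrix

theorem le_mul_sub_mul_log {a s x : ℝ} (ha : 0 < a) (hs : 0 < s) (hx : 0 < x) :
    a * Real.log s + a - a * Real.log a ≤ s * x - a * Real.log x := by
  have h := Real.log_le_sub_one_of_pos (show 0 < s * x / a by positivity)
  rw [Real.log_div (by positivity) ha.ne', Real.log_mul hs.ne' hx.ne'] at h
  have := mul_le_mul_of_nonneg_left h ha.le
  rw [mul_sub (a := a) (b := s * x / a), mul_div_cancel₀ _ ha.ne'] at this
  linarith

theorem exists_add_mul_log_le_sub_mul_log {a b c : ℝ} (ha : 0 < a) (hb : 0 < b) (hc : 0 < c) :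
    ∃ K, ∀ l t R : ℝ, 0 < l → l ≤ t → 0 ≤ R →
      a * Real.log (c + R / 2) + c / 2 * t + K
        ≤ l / 2 * R + 2 * c * t - a * Real.log l - b * Real.log (1 + t) := by
  refine ⟨a - a * Real.log a + (b * Real.log (c / 2) + b - b * Real.log b) - c / 2,
    fun l t R hl hlt hR => ?_⟩
  have hl' := le_mul_sub_mul_log ha (show 0 < c + R / 2 by positivity) hl
  have ht' := le_mul_sub_mul_log hb (half_pos hc) (show 0 < 1 + t by linarith)
  linarith [mul_le_mul_of_nonneg_left hlt hc.le]

theorem sub_mul_log_le_f {n M : ℕ} {κ ν ε l : ℝ} {Z : Fin M → Fin n → ℝ}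
    {D SN : Fin M → Matrix (Fin n) (Fin n) ℝ} {μ0 : Fin n → ℝ} {S0 : Matrix (Fin n) (Fin n) ℝ}
    {C : Fin M → Fin n → ℝ} {μ : Fin n → ℝ} {Λ : Matrix (Fin n) (Fin n) ℝ}
    (hκ : 0 ≤ κ) (hν : 0 ≤ ν) (hνnM : (n : ℝ) ≤ ν + M) (hSN : ∀ i, (SN i).PosDef)
    (hS0 : ε • 1 ≤ S0) (hΛ : Λ.PosDef) (hl : 0 < l) (hlΛ : l • 1 ≤ Λ)
    (hdet : Λ.det ≤ l * (1 + Λ.trace) ^ n) :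
    l / 2 * deviation κ μ0 (C, μ) + ν * ε / 2 * Λ.trace - (ν - n + M) / 2 * Real.log l
        - (ν - n + M) / 2 * n * Real.log (1 + Λ.trace)
      ≤ f n M κ ν Z D SN μ0 S0 C μ Λ := by
  have ha : 0 ≤ (ν - n + M) / 2 := by linarith
  have hdata : 0 ≤ ∑ i, (Z i - D i *ᵥ C i) ⬝ᵥ (SN i)⁻¹ *ᵥ (Z i - D i *ᵥ C i) :=
    Finset.sum_nonneg fun i _ => by
      simpa using (hSN i).inv.posSemidef.dotProduct_mulVec_nonneg (Z i - D i *ᵥ C i)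
  have hlogdet : Real.log Λ.det ≤ Real.log l + n * Real.log (1 + Λ.trace) := by
    have := hΛ.posSemidef.trace_nonneg
    rw [← Real.log_pow, ← Real.log_mul hl.ne' (by positivity)]
    exact Real.log_le_log hΛ.det_pos hdet
  have hquad : l * deviation κ μ0 (C, μ) ≤
      ∑ i, (C i - μ) ⬝ᵥ Λ *ᵥ (C i - μ) + κ * ((μ - μ0) ⬝ᵥ Λ *ᵥ (μ - μ0)) := by
    rw [deviation, mul_add, Finset.mul_sum, mul_left_comm]
    exact add_le_add (Finset.sum_le_sum fun i _ => smul_dotProduct_le_of_smul_one_le hlΛ _)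
      (mul_le_mul_of_nonneg_left (smul_dotProduct_le_of_smul_one_le hlΛ _) hκ)
  have htrace : ε * Λ.trace ≤ (S0 * Λ).trace := by
    simpa using trace_mul_le_trace_mul_of_le hS0 hΛ.posSemidef
  rw [f, smul_mul_assoc, trace_smul, smul_eq_mul]
  linarith [mul_le_mul_of_nonneg_left hlogdet ha, mul_le_mul_of_nonneg_left htrace hν]

theorem exists_log_deviation_add_norm_le_f {n M : ℕ} {κ ν : ℝ} {Z : Fin M → Fin n → ℝ}
    {D SN : Fin M → Matrix (Fin n) (Fin n) ℝ} {μ0 : Fin n → ℝ} {S0 : Matrix (Fin n) (Fin n) ℝ}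
    (hn : 1 ≤ n) (hM : 1 ≤ M) (hκ : 0 ≤ κ) (hν : (n : ℝ) - 1 < ν) (hSN : ∀ i, (SN i).PosDef)
    (hS0 : S0.PosDef) :
    ∃ a c K : ℝ, 0 < a ∧ 0 < c ∧ ∀ C μ Λ, Λ.PosDef →
      a * Real.log (c + deviation κ μ0 (C, μ) / 2) + c / 2 * ‖Λ‖ + K
        ≤ f n M κ ν Z D SN μ0 S0 C μ Λ := by
  have : Nonempty (Fin n) := Fin.pos_iff_nonempty.mp hn
  have hM1 : (1 : ℝ) ≤ M := by exact_mod_cast hM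
  have hn1 : (1 : ℝ) ≤ n := by exact_mod_cast hn
  obtain ⟨ε, hε, hεS0, -⟩ := hS0.exists_smul_one_le_and_det_le
  have ha : 0 < (ν - n + M) / 2 := by linarith
  have hc : 0 < ν * ε / 4 := by
    have : 0 < ν := by linarith
    positivity
  obtain ⟨K, hK⟩ := exists_add_mul_log_le_sub_mul_log ha (mul_pos ha (by linarith : (0 : ℝ) < n)) hc
  refine ⟨_, _, K, ha, hc, fun C μ Λ hΛ => ?_⟩
  obtain ⟨l, hl, hlΛ, hlt, hdet⟩ := hΛ.exists_smul_one_le_and_det_le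
  rw [Fintype.card_fin] at hdet
  have hf := sub_mul_log_le_f (ν := ν) (ε := ε) (Z := Z) (D := D) (C := C) (μ := μ) (μ0 := μ0)
    hκ (by linarith) (by linarith) hSN hεS0 hΛ hl hlΛ hdet
  have hlow := hK l Λ.trace (deviation κ μ0 (C, μ)) hl hlt (deviation_nonneg hκ _)
  linarith [mul_le_mul_of_nonneg_left hΛ.posSemidef.norm_le_trace (half_pos hc).le]

end MatrixOrder

/-- f is coercive on `(ℝⁿ)^M × ℝⁿ × S_n^{++}(ℝ)`: along any sequence of
points with positive definite Λ-component whose norm tends to infinity, f tends to +∞. -/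
theorem stmt_5 (n M : ℕ) (hn : 1 ≤ n) (hM : 1 ≤ M)
    (κ ν : ℝ) (hκ : 0 < κ) (hν : (n : ℝ) - 1 < ν)
    (Z : Fin M → Fin n → ℝ) (D : Fin M → Matrix (Fin n) (Fin n) ℝ)
    (SN : Fin M → Matrix (Fin n) (Fin n) ℝ) (hSN : ∀ i, (SN i).PosDef)
    (μ0 : Fin n → ℝ) (S0 : Matrix (Fin n) (Fin n) ℝ) (hS0 : S0.PosDef)
    (x : ℕ → (Fin M → Fin n → ℝ) × (Fin n → ℝ) × Matrix (Fin n) (Fin n) ℝ)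
    (hx : ∀ k, (x k).2.2.PosDef)
    (hnorm : Filter.Tendsto (fun k => ‖x k‖) Filter.atTop Filter.atTop) :
    Filter.Tendsto (fun k => f n M κ ν Z D SN μ0 S0 (x k).1 (x k).2.1 (x k).2.2)
      Filter.atTop Filter.atTop := by
  obtain ⟨a, c, K, ha, hc, hK⟩ :=
    exists_log_deviation_add_norm_le_f (Z := Z) (D := D) (μ0 := μ0) hn hM hκ.le hν hSN hS0
  have hdev : Tendsto (fun p : (Fin M → Fin n → ℝ) × (Fin n → ℝ) =>
      a * Real.log (c + deviation κ μ0 p / 2)) (cobounded _) atTop :=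
    (Real.tendsto_log_atTop.comp <| tendsto_atTop_add_const_left _ c <|
      (tendsto_deviation_cobounded hκ).atTop_div_const two_pos).const_mul_atTop ha
  have hΛ : Tendsto (fun Λ : Matrix (Fin n) (Fin n) ℝ => c / 2 * ‖Λ‖) (cobounded _) atTop :=
    tendsto_norm_cobounded_atTop.const_mul_atTop (half_pos hc)
  have hsum := tendsto_add_cobounded_prod hdev hΛ (a := a * Real.log c) (b := 0)
    (fun p => mul_le_mul_of_nonneg_left (Real.log_le_log hc <| by
      linarith [deviation_nonneg hκ.le (μ0 := μ0) p]) ha.le)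
    (fun Λ => by positivity)
  have hy : Tendsto (fun k => (((x k).1, (x k).2.1), (x k).2.2)) atTop (cobounded _) := by
    rw [← tendsto_norm_atTop_iff_cobounded]
    simpa only [Prod.norm_def, max_assoc] using hnorm
  refine tendsto_atTop_mono (fun k => ?_) (tendsto_atTop_add_const_right _ K (hsum.comp hy))
  exact hK (x k).1 (x k).2.1 (x k).2.2 (hx k)
end

section
/- The function f is bounded below on its domain: there exists m ∈ ℝ such that f({C_i}, μ, Λ) ≥ m for all ({C_i}, μ, Λ) ∈ (ℝ^n)^M × ℝ^n × S_n^{++}(ℝ). More precisely, with m_Λ the global minimum over S_n^{++}(ℝ) of Λ ↦ −((ν − n + M)/2) log det Λ + (1/2) trace(ν Σ_0 Λ), one has f({C_i}, μ, Λ) ≥ m_Λ + (1/2)∑_{i=1}^M (C_i − μ)^T Λ (C_i − μ) + (κ/2)(μ − μ_0)^T Λ (μ − μ_0) ≥ m_Λ. -/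
/-!
Writing `α = (ν - n + M)/2 > 0` and `P = (ν / 2α) Σ₀`, the `Λ`-part of `f` is
`α (tr(PΛ) - log det Λ)`. With `B = √P`, the matrix `BΛB` is positive definite, and
`log t ≤ t - 1` applied to its eigenvalues gives `tr(PΛ) - log det Λ ≥ n + log det P`, with
equality at `Λ = P⁻¹`. The remaining terms of `f` are positive semidefinite quadratic forms.
-/

open Matrix

namespace Matrix

variable {ι : Type*} [Fintype ι] [DecidableEq ι]

lemma PosDef.card_le_trace_sub_log_det {X : Matrix ι ι ℝ} (hX : X.PosDef) :
    (Fintype.card ι : ℝ) ≤ X.trace - Real.log X.det := by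
  have htrace : X.trace = ∑ i, hX.1.eigenvalues i := by
    simpa using hX.1.trace_eq_sum_eigenvalues
  have hdet : X.det = ∏ i, hX.1.eigenvalues i := by
    simpa using hX.1.det_eq_prod_eigenvalues
  rw [htrace, hdet, Real.log_prod fun i _ => (hX.eigenvalues_pos i).ne',
    ← Finset.sum_sub_distrib, Fintype.card_eq_sum_ones, Nat.cast_sum, Nat.cast_one]
  gcongr with i
  linarith [Real.log_le_sub_one_of_pos (hX.eigenvalues_pos i)]

open scoped MatrixOrder in
lemma PosDef.card_add_log_det_le_trace_mul_sub_log_det {P Λ : Matrix ι ι ℝ} (hP : P.PosDef)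
    (hΛ : Λ.PosDef) :
    (Fintype.card ι : ℝ) + Real.log P.det ≤ (P * Λ).trace - Real.log Λ.det := by
  set B := CFC.sqrt P
  have hBB : B * B = P := CFC.sqrt_mul_sqrt_self P hP.posSemidef.nonneg
  have hB : Bᵀ = B := (CFC.sqrt_nonneg P).posSemidef.isHermitian
  have hBunit : IsUnit B := by
    rw [isUnit_iff_isUnit_det, isUnit_iff_ne_zero]
    intro h
    simpa [← hBB, h] using hP.det_pos.ne'
  have hX : (B * Λ * B).PosDef := by
    have := (IsUnit.posDef_star_left_conjugate_iff hBunit).2 hΛ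
    rwa [star_eq_conjTranspose, conjTranspose_eq_transpose_of_trivial, hB] at this
  have htrace : (B * Λ * B).trace = (P * Λ).trace := by
    rw [trace_mul_comm, ← mul_assoc, hBB]
  have hlog : Real.log (B * Λ * B).det = Real.log P.det + Real.log Λ.det := by
    rw [← Real.log_mul hP.det_pos.ne' hΛ.det_pos.ne', ← hBB, det_mul, det_mul, det_mul]
    ring_nf
  linarith [hX.card_le_trace_sub_log_det]

lemma PosDef.isLeast_trace_mul_sub_log_det {P : Matrix ι ι ℝ} (hP : P.PosDef) :
    IsLeast ((fun Λ : Matrix ι ι ℝ => (P * Λ).trace - Real.log Λ.det) '' {Λ | Λ.PosDef})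
      (Fintype.card ι + Real.log P.det) := by
  refine ⟨⟨P⁻¹, hP.inv, ?_⟩, ?_⟩
  · simp [mul_nonsing_inv P hP.det_pos.ne'.isUnit, det_nonsing_inv, Real.log_inv]
  · rintro _ ⟨Λ, hΛ, rfl⟩
    exact hP.card_add_log_det_le_trace_mul_sub_log_det hΛ

end Matrix

lemma IsLeast.image_const_mul {α : Type*} {S : Set α} {g : α → ℝ} {m a : ℝ} (ha : 0 ≤ a)
    (hm : IsLeast (g '' S) m) : IsLeast ((fun x => a * g x) '' S) (a * m) := by
  simpa [Set.image_image] using (monotone_mul_left_of_nonneg ha).map_isLeast hm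

/-- f is bounded below; more precisely, with `mΛ` the global minimum over
`S_n^{++}(ℝ)` of `Λ ↦ −((ν−n+M)/2) log det Λ + (1/2) trace(ν Σ₀ Λ)`, one has
`f({C_i}, μ, Λ) ≥ mΛ + (1/2)∑(C_i−μ)ᵀΛ(C_i−μ) + (κ/2)(μ−μ₀)ᵀΛ(μ−μ₀) ≥ mΛ`. -/
theorem stmt_7 (n M : ℕ) (hn : 1 ≤ n) (hM : 1 ≤ M)
    (κ ν : ℝ) (hκ : 0 < κ) (hν : (n : ℝ) - 1 < ν)
    (Z : Fin M → Fin n → ℝ) (D : Fin M → Matrix (Fin n) (Fin n) ℝ)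
    (SN : Fin M → Matrix (Fin n) (Fin n) ℝ) (hSN : ∀ i, (SN i).PosDef)
    (μ0 : Fin n → ℝ) (S0 : Matrix (Fin n) (Fin n) ℝ) (hS0 : S0.PosDef) :
    ∃ mΛ : ℝ,
      IsLeast ((fun Λ : Matrix (Fin n) (Fin n) ℝ =>
          -((ν - n + M)/2) * Real.log Λ.det + (1/2) * (ν • S0 * Λ).trace) ''
        {Λ | Λ.PosDef}) mΛ ∧
      ∀ (C : Fin M → Fin n → ℝ) (μ : Fin n → ℝ) (Λ : Matrix (Fin n) (Fin n) ℝ),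
        Λ.PosDef →
        mΛ ≤ mΛ + (1/2) * ∑ i, (C i - μ) ⬝ᵥ Λ.mulVec (C i - μ)
                + (κ/2) * ((μ - μ0) ⬝ᵥ Λ.mulVec (μ - μ0)) ∧
        mΛ + (1/2) * ∑ i, (C i - μ) ⬝ᵥ Λ.mulVec (C i - μ)
          + (κ/2) * ((μ - μ0) ⬝ᵥ Λ.mulVec (μ - μ0))
          ≤ f n M κ ν Z D SN μ0 S0 C μ Λ := by
  have hn' : (1 : ℝ) ≤ n := by exact_mod_cast hn
  have hM' : (1 : ℝ) ≤ M := by exact_mod_cast hM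
  set α : ℝ := (ν - n + M) / 2 with hα_def
  have hα : 0 < α := by linarith
  have hν₀ : 0 < ν := by linarith
  set P := (ν / (2 * α)) • S0
  have hP : P.PosDef := hS0.smul (by positivity)
  have hobj : (fun Λ : Matrix (Fin n) (Fin n) ℝ =>
      -α * Real.log Λ.det + (1/2) * (ν • S0 * Λ).trace) =
      fun Λ => α * ((P * Λ).trace - Real.log Λ.det) := by
    funext Λ
    simp only [P, smul_mul_assoc, trace_smul, smul_eq_mul]
    field_simp
    ring
  have hleast := hP.isLeast_trace_mul_sub_log_det.image_const_mul hα.le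
  rw [← hobj] at hleast
  refine ⟨_, hleast, fun C μ Λ hΛ => ?_⟩
  have hbound : _ ≤ -α * Real.log Λ.det + (1/2) * (ν • S0 * Λ).trace :=
    hleast.2 ⟨Λ, hΛ, rfl⟩
  have hprior : 0 ≤ ∑ i, (C i - μ) ⬝ᵥ Λ *ᵥ (C i - μ) :=
    Finset.sum_nonneg fun i _ => hΛ.posSemidef.dotProduct_mulVec_nonneg (C i - μ)
  have hhyper : 0 ≤ κ * ((μ - μ0) ⬝ᵥ Λ *ᵥ (μ - μ0)) :=
    mul_nonneg hκ.le (hΛ.posSemidef.dotProduct_mulVec_nonneg (μ - μ0))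
  have hfit : 0 ≤ ∑ i, (Z i - D i *ᵥ C i) ⬝ᵥ (SN i)⁻¹ *ᵥ (Z i - D i *ᵥ C i) :=
    Finset.sum_nonneg fun i _ => (hSN i).inv.posSemidef.dotProduct_mulVec_nonneg _
  constructor
  · linarith
  · rw [f, ← hα_def]
    linarith
end

section
/- The alternating-minimization map G is continuous on (ℝ^n)^M × ℝ^n × S_n^{++}(ℝ), and G maps this set into itself (in particular the Λ-component of G(x) is symmetric positive definite for every x in the domain). -/
/-!
Each component of `G` is built from `Λ` by sums, products and matrix inverses, so it is
continuous wherever the inverted matrices are nonsingular. At a positive definite `Λ` they are: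
`D Λ⁻¹ Dᵀ + Σ_N` is positive definite, and
`κ I + ∑ A_i D_i = Λ⁻¹ (κ Λ + ∑ D_iᵀ (D_i Λ⁻¹ D_iᵀ + Σ_{N_i})⁻¹ D_i)` is a product of two positive
definite matrices. The matrix inverted to produce `Λ'` is a positive multiple (as `ν + M - n > 0`)
of `ν Σ_0` plus rank-one positive semidefinite terms, hence positive definite for every input.
-/

open Matrix Filter

/-- The alternating-minimization map `G` on `(ℝⁿ)^M × ℝⁿ × S_n^{++}(ℝ)`. -/
noncomputable def G (n M : ℕ) (κ ν : ℝ) (Z : Fin M → Fin n → ℝ)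
    (D : Fin M → Matrix (Fin n) (Fin n) ℝ) (SN : Fin M → Matrix (Fin n) (Fin n) ℝ)
    (μ0 : Fin n → ℝ) (S0 : Matrix (Fin n) (Fin n) ℝ)
    (x : (Fin M → Fin n → ℝ) × (Fin n → ℝ) × Matrix (Fin n) (Fin n) ℝ) :
    (Fin M → Fin n → ℝ) × (Fin n → ℝ) × Matrix (Fin n) (Fin n) ℝ :=
  let Λ := x.2.2
  let A : Fin M → Matrix (Fin n) (Fin n) ℝ :=
    fun i => Λ⁻¹ * (D i)ᵀ * (D i * Λ⁻¹ * (D i)ᵀ + SN i)⁻¹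
  let μ' : Fin n → ℝ :=
    (κ • (1 : Matrix (Fin n) (Fin n) ℝ) + ∑ i, A i * D i)⁻¹.mulVec
      (∑ i, (A i).mulVec (Z i) + κ • μ0)
  let C' : Fin M → Fin n → ℝ := fun i => (A i).mulVec (Z i - (D i).mulVec μ') + μ'
  let Λ' : Matrix (Fin n) (Fin n) ℝ :=
    ((ν + M - n)⁻¹ • (ν • S0 + κ • vecMulVec (μ' - μ0) (μ' - μ0)
      + ∑ i, vecMulVec (C' i - μ') (C' i - μ')))⁻¹
  (C', μ', Λ')

section ContinuousAt

variable {X R l m n : Type*} [TopologicalSpace X] [TopologicalSpace R] {x : X}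

theorem continuousAt_finsetSum {ι M : Type*} [AddCommMonoid M] [TopologicalSpace M]
    [ContinuousAdd M] {f : ι → X → M} (s : Finset ι) (hf : ∀ i ∈ s, ContinuousAt (f i) x) :
    ContinuousAt (fun y => ∑ i ∈ s, f i y) x :=
  tendsto_finsetSum s hf

theorem ContinuousAt.matrix_mul [Fintype m] [Mul R] [AddCommMonoid R] [ContinuousAdd R]
    [ContinuousMul R] {A : X → Matrix l m R} {B : X → Matrix m n R}
    (hA : ContinuousAt A x) (hB : ContinuousAt B x) : ContinuousAt (fun y => A y * B y) x :=
  (continuous_fst.matrix_mul continuous_snd).continuousAt.comp (hA.prodMk hB)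

theorem ContinuousAt.matrix_mulVec [Fintype n] [NonUnitalNonAssocSemiring R] [ContinuousAdd R]
    [ContinuousMul R] {A : X → Matrix m n R} {v : X → n → R} (hA : ContinuousAt A x)
    (hv : ContinuousAt v x) : ContinuousAt (fun y => A y *ᵥ v y) x :=
  (continuous_fst.matrix_mulVec continuous_snd).continuousAt.comp (hA.prodMk hv)

theorem ContinuousAt.matrix_inv [Fintype n] [DecidableEq n] [Field R] [IsTopologicalDivisionRing R]
    {A : X → Matrix n n R} (hA : ContinuousAt A x) (h : (A x).det ≠ 0) :
    ContinuousAt (fun y => (A y)⁻¹) x :=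
  (continuousAt_matrix_inv _ (by rw [Ring.inverse_eq_inv']; exact continuousAt_inv₀ h)).comp hA

end ContinuousAt

noncomputable section AlternatingMinimization

variable {ι m p : Type*}

section Scatter

variable [Fintype ι]

def scatter (κ ν : ℝ) (S0 : Matrix m m ℝ) (μ0 μ : m → ℝ) (C : ι → m → ℝ) : Matrix m m ℝ :=
  ν • S0 + κ • vecMulVec (μ - μ0) (μ - μ0) + ∑ i, vecMulVec (C i - μ) (C i - μ)

theorem continuous_scatter (κ ν : ℝ) (S0 : Matrix m m ℝ) (μ0 : m → ℝ) :
    Continuous fun q : (m → ℝ) × (ι → m → ℝ) => scatter κ ν S0 μ0 q.1 q.2 := by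
  unfold scatter
  fun_prop

theorem scatter_posDef [Fintype m] {κ ν : ℝ} {S0 : Matrix m m ℝ} (hν : 0 < ν) (hκ : 0 ≤ κ)
    (hS0 : S0.PosDef) (μ0 μ : m → ℝ) (C : ι → m → ℝ) : (scatter κ ν S0 μ0 μ C).PosDef := by
  have hvv (v : m → ℝ) : (vecMulVec v v).PosSemidef := by
    simpa only [star_trivial] using posSemidef_vecMulVec_self_star v
  exact ((hS0.smul hν).add_posSemidef ((hvv _).smul hκ)).add_posSemidef
    (posSemidef_sum _ fun i _ => hvv _)

end Scatter

variable [Fintype m] [DecidableEq m] [Fintype p] [DecidableEq p]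
  {κ ν c : ℝ} {Z : ι → p → ℝ} {D : ι → Matrix p m ℝ} {SN : ι → Matrix p p ℝ}
  {μ0 : m → ℝ} {S0 Λ : Matrix m m ℝ}

def gain (D : ι → Matrix p m ℝ) (SN : ι → Matrix p p ℝ) (Λ : Matrix m m ℝ) (i : ι) :
    Matrix m p ℝ :=
  Λ⁻¹ * (D i)ᵀ * (D i * Λ⁻¹ * (D i)ᵀ + SN i)⁻¹

theorem continuousAt_gain (hΛ : Λ.PosDef) (hSN : ∀ i, (SN i).PosDef) (i : ι) :
    ContinuousAt (fun Λ => gain D SN Λ i) Λ := by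
  have hinv : ContinuousAt (fun Λ : Matrix m m ℝ => Λ⁻¹) Λ :=
    continuousAt_id.matrix_inv hΛ.det_pos.ne'
  exact (hinv.matrix_mul continuousAt_const).matrix_mul
    ((((continuousAt_const.matrix_mul hinv).matrix_mul continuousAt_const).add
      continuousAt_const).matrix_inv (hΛ.mul_inv_mul_transpose_add (hSN i) (D i)).det_pos.ne')

variable [Fintype ι]

def meanUpdate (κ : ℝ) (Z : ι → p → ℝ) (D : ι → Matrix p m ℝ) (SN : ι → Matrix p p ℝ)
    (μ0 : m → ℝ) (Λ : Matrix m m ℝ) : m → ℝ :=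
  (κ • (1 : Matrix m m ℝ) + ∑ i, gain D SN Λ i * D i)⁻¹ *ᵥ (∑ i, gain D SN Λ i *ᵥ Z i + κ • μ0)

def latentUpdate (κ : ℝ) (Z : ι → p → ℝ) (D : ι → Matrix p m ℝ) (SN : ι → Matrix p p ℝ)
    (μ0 : m → ℝ) (Λ : Matrix m m ℝ) (i : ι) : m → ℝ :=
  gain D SN Λ i *ᵥ (Z i - D i *ᵥ meanUpdate κ Z D SN μ0 Λ) + meanUpdate κ Z D SN μ0 Λ

def precisionUpdate (c κ ν : ℝ) (Z : ι → p → ℝ) (D : ι → Matrix p m ℝ) (SN : ι → Matrix p p ℝ)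
    (μ0 : m → ℝ) (S0 : Matrix m m ℝ) (Λ : Matrix m m ℝ) : Matrix m m ℝ :=
  (c⁻¹ • scatter κ ν S0 μ0 (meanUpdate κ Z D SN μ0 Λ) (latentUpdate κ Z D SN μ0 Λ))⁻¹

theorem precisionUpdate_posDef (hc : 0 < c) (hν : 0 < ν) (hκ : 0 ≤ κ) (hS0 : S0.PosDef) :
    (precisionUpdate c κ ν Z D SN μ0 S0 Λ).PosDef :=
  ((scatter_posDef hν hκ hS0 _ _ _).smul (inv_pos.2 hc)).inv

theorem smul_one_add_sum_gain_mul (hΛ : IsUnit Λ.det) :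
    κ • (1 : Matrix m m ℝ) + ∑ i, gain D SN Λ i * D i =
      Λ⁻¹ * (κ • Λ + ∑ i, (D i)ᵀ * (D i * Λ⁻¹ * (D i)ᵀ + SN i)⁻¹ * D i) := by
  rw [Matrix.mul_add, Matrix.mul_smul, nonsing_inv_mul Λ hΛ, Finset.mul_sum]
  simp only [gain, Matrix.mul_assoc]

theorem det_smul_one_add_sum_gain_mul_ne_zero (hκ : 0 < κ) (hΛ : Λ.PosDef)
    (hSN : ∀ i, (SN i).PosDef) : (κ • (1 : Matrix m m ℝ) + ∑ i, gain D SN Λ i * D i).det ≠ 0 := by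
  have hsum : (κ • Λ + ∑ i, (D i)ᵀ * (D i * Λ⁻¹ * (D i)ᵀ + SN i)⁻¹ * D i).PosDef := by
    refine (hΛ.smul hκ).add_posSemidef (posSemidef_sum _ fun i _ => ?_)
    simpa only [conjTranspose_eq_transpose_of_trivial] using
      (hΛ.mul_inv_mul_transpose_add (hSN i) (D i)).inv.posSemidef.conjTranspose_mul_mul_same (D i)
  rw [smul_one_add_sum_gain_mul hΛ.det_pos.ne'.isUnit, det_mul]
  exact mul_ne_zero hΛ.inv.det_pos.ne' hsum.det_pos.ne'

theorem continuousAt_meanUpdate (hκ : 0 < κ) (hΛ : Λ.PosDef) (hSN : ∀ i, (SN i).PosDef) :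
    ContinuousAt (meanUpdate κ Z D SN μ0) Λ :=
  ((continuousAt_const.add (continuousAt_finsetSum _ fun i _ =>
      (continuousAt_gain hΛ hSN i).matrix_mul continuousAt_const)).matrix_inv
    (det_smul_one_add_sum_gain_mul_ne_zero hκ hΛ hSN)).matrix_mulVec
    ((continuousAt_finsetSum _ fun i _ =>
      (continuousAt_gain hΛ hSN i).matrix_mulVec continuousAt_const).add continuousAt_const)

theorem continuousAt_latentUpdate (hκ : 0 < κ) (hΛ : Λ.PosDef) (hSN : ∀ i, (SN i).PosDef) :
    ContinuousAt (latentUpdate κ Z D SN μ0) Λ := by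
  have hμ : ContinuousAt (meanUpdate κ Z D SN μ0) Λ := continuousAt_meanUpdate hκ hΛ hSN
  exact continuousAt_pi.2 fun i => ((continuousAt_gain hΛ hSN i).matrix_mulVec
    (continuousAt_const.sub (continuousAt_const.matrix_mulVec hμ))).add hμ

theorem continuousAt_precisionUpdate (hc : 0 < c) (hν : 0 < ν) (hκ : 0 < κ) (hS0 : S0.PosDef)
    (hΛ : Λ.PosDef) (hSN : ∀ i, (SN i).PosDef) :
    ContinuousAt (precisionUpdate c κ ν Z D SN μ0 S0) Λ :=
  ((((continuous_scatter κ ν S0 μ0).continuousAt.comp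
      ((continuousAt_meanUpdate hκ hΛ hSN).prodMk
        (continuousAt_latentUpdate hκ hΛ hSN))).const_smul c⁻¹).matrix_inv
    ((scatter_posDef hν hκ.le hS0 _ _ _).smul (inv_pos.2 hc)).det_pos.ne')

end AlternatingMinimization

theorem G_apply (n M : ℕ) (κ ν : ℝ) (Z : Fin M → Fin n → ℝ)
    (D SN : Fin M → Matrix (Fin n) (Fin n) ℝ) (μ0 : Fin n → ℝ) (S0 : Matrix (Fin n) (Fin n) ℝ)
    (x : (Fin M → Fin n → ℝ) × (Fin n → ℝ) × Matrix (Fin n) (Fin n) ℝ) :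
    G n M κ ν Z D SN μ0 S0 x = (latentUpdate κ Z D SN μ0 x.2.2, meanUpdate κ Z D SN μ0 x.2.2,
      precisionUpdate (ν + M - n) κ ν Z D SN μ0 S0 x.2.2) :=
  rfl

/-- The alternating-minimization map G is continuous on
`(ℝⁿ)^M × ℝⁿ × S_n^{++}(ℝ)` and maps this set into itself (the Λ-component of
`G(x)` is symmetric positive definite for every x in the domain). -/
theorem stmt_10 (n M : ℕ) (hn : 1 ≤ n) (hM : 1 ≤ M)
    (κ ν : ℝ) (hκ : 0 < κ) (hν : (n : ℝ) - 1 < ν)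
    (Z : Fin M → Fin n → ℝ) (D : Fin M → Matrix (Fin n) (Fin n) ℝ)
    (SN : Fin M → Matrix (Fin n) (Fin n) ℝ) (hSN : ∀ i, (SN i).PosDef)
    (μ0 : Fin n → ℝ) (S0 : Matrix (Fin n) (Fin n) ℝ) (hS0 : S0.PosDef) :
    ContinuousOn (G n M κ ν Z D SN μ0 S0)
      {x : (Fin M → Fin n → ℝ) × (Fin n → ℝ) × Matrix (Fin n) (Fin n) ℝ |
        x.2.2.PosDef} ∧
    ∀ x : (Fin M → Fin n → ℝ) × (Fin n → ℝ) × Matrix (Fin n) (Fin n) ℝ,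
      x.2.2.PosDef → (G n M κ ν Z D SN μ0 S0 x).2.2.PosDef := by
  have hν0 : 0 < ν := by
    have : (1 : ℝ) ≤ n := by exact_mod_cast hn
    linarith
  have hc : 0 < ν + M - n := by
    have : (1 : ℝ) ≤ M := by exact_mod_cast hM
    linarith
  simp only [funext (G_apply n M κ ν Z D SN μ0 S0)]
  refine ⟨fun x hx => ?_, fun x _ => precisionUpdate_posDef hc hν0 hκ.le hS0⟩
  have hupdate : ContinuousAt (fun Λ => (latentUpdate κ Z D SN μ0 Λ, meanUpdate κ Z D SN μ0 Λ,
      precisionUpdate (ν + M - n) κ ν Z D SN μ0 S0 Λ)) x.2.2 :=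
    (continuousAt_latentUpdate hκ hx hSN).prodMk ((continuousAt_meanUpdate hκ hx hSN).prodMk
      (continuousAt_precisionUpdate hc hν0 hκ hS0 hx hSN))
  exact (hupdate.comp_of_eq continuous_snd.snd.continuousAt rfl).continuousWithinAt
end
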